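/- Let g: Ω → ℂ be smooth with |g| < 1 everywhere and harmonic into the hyperbolic disk (i.e. g_{z z̄} + (2 conj(g)/(1-|g|²))·g_z·g_{z̄} = 0). Let F: Ω → ℂ satisfy F_z = -4i·g_z/(1-|g|²)² and F_{z̄} = -4i·g²·conj(g_z)/(1-|g|²)². Define η = 8i·conj(g)·g_z/(1-|g|²)². Then the imaginary part of ∂_{z̄}( η/2 - (i/4)(conj(F)·F_z - F·conj(F_z)) ) vanishes; indeed ∂_{z̄}( η/2 - (i/4)(conj(F)·F_z - F·conj(F_z)) ) = (i/4)(F·conj(F_{z z̄}) - conj(F)·F_{z z̄}). -/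

import Mathlib

open Complex
open ComplexConjugate

/-- Wirtinger derivative `∂_z = (∂_u - i ∂_v)/2` of a map `ℂ → ℂ`. -/
noncomputable def Wz (f : ℂ → ℂ) (p : ℂ) : ℂ :=
  (1/2) * (fderiv ℝ f p 1 - I * fderiv ℝ f p I)

/-- Wirtinger derivative `∂_z̄ = (∂_u + i ∂_v)/2` of a map `ℂ → ℂ`. -/
noncomputable def Wzb (f : ℂ → ℂ) (p : ℂ) : ℂ :=
  (1/2) * (fderiv ℝ f p 1 + I * fderiv ℝ f p I)

/-- Wirtinger derivative `∂_z` of a real-valued function on `ℂ`. -/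
noncomputable def WzR (h : ℂ → ℝ) (p : ℂ) : ℂ :=
  (1/2) * ((fderiv ℝ h p 1 : ℝ) - I * (fderiv ℝ h p I : ℝ))

/-- `1 - |w|²` as a complex number. -/
noncomputable def NS (w : ℂ) : ℂ := ((1 - Complex.normSq w : ℝ) : ℂ)

/-- `η = 8i·conj(g)·g_z/(1-|g|²)²`. -/
noncomputable def Eta (g : ℂ → ℂ) (z : ℂ) : ℂ :=
  8 * I * conj (g z) * Wz g z / (NS (g z))^2


section TK
variable {f h : ℂ → ℂ} {p : ℂ}

theorem Wz_congr (e : f =ᶠ[nhds p] h) : Wz f p = Wz h p := by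
  unfold Wz; rw [e.fderiv_eq]
theorem Wzb_congr (e : f =ᶠ[nhds p] h) : Wzb f p = Wzb h p := by
  unfold Wzb; rw [e.fderiv_eq]

theorem Wz_sub (hf : DifferentiableAt ℝ f p) (hh : DifferentiableAt ℝ h p) :
    Wz (fun w => f w - h w) p = Wz f p - Wz h p := by
  unfold Wz; rw [fderiv_fun_sub hf hh]; simp; ring
theorem Wzb_sub (hf : DifferentiableAt ℝ f p) (hh : DifferentiableAt ℝ h p) :
    Wzb (fun w => f w - h w) p = Wzb f p - Wzb h p := by
  unfold Wzb; rw [fderiv_fun_sub hf hh]; simp; ring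

theorem Wz_mul (hf : DifferentiableAt ℝ f p) (hh : DifferentiableAt ℝ h p) :
    Wz (fun w => f w * h w) p = f p * Wz h p + h p * Wz f p := by
  unfold Wz; rw [fderiv_fun_mul hf hh]; simp; ring
theorem Wzb_mul (hf : DifferentiableAt ℝ f p) (hh : DifferentiableAt ℝ h p) :
    Wzb (fun w => f w * h w) p = f p * Wzb h p + h p * Wzb f p := by
  unfold Wzb; rw [fderiv_fun_mul hf hh]; simp; ring

theorem Wz_const_mul (hf : DifferentiableAt ℝ f p) (k : ℂ) :
    Wz (fun w => k * f w) p = k * Wz f p := by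
  unfold Wz; rw [fderiv_const_mul hf]; simp; ring
theorem Wzb_const_mul (hf : DifferentiableAt ℝ f p) (k : ℂ) :
    Wzb (fun w => k * f w) p = k * Wzb f p := by
  unfold Wzb; rw [fderiv_const_mul hf]; simp; ring

theorem Wz_const (k : ℂ) : Wz (fun _ => k) p = 0 := by
  unfold Wz; simp
theorem Wzb_const (k : ℂ) : Wzb (fun _ => k) p = 0 := by
  unfold Wzb; simp

theorem fderiv_conj_comp (hf : DifferentiableAt ℝ f p) (v : ℂ) :
    fderiv ℝ (fun w => conj (f w)) p v = conj (fderiv ℝ f p v) := by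
  have : (fun w => conj (f w)) = fun w => Complex.conjCLE (f w) := by
    funext w; simp
  rw [this, show (fun w => Complex.conjCLE (f w)) = (⇑Complex.conjCLE ∘ f) from rfl,
    fderiv_comp p (Complex.conjCLE.differentiable.differentiableAt) hf]
  rw [ContinuousLinearEquiv.fderiv]; simp

theorem Wz_conj (hf : DifferentiableAt ℝ f p) :
    Wz (fun w => conj (f w)) p = conj (Wzb f p) := by
  unfold Wz Wzb
  rw [fderiv_conj_comp hf, fderiv_conj_comp hf]
  simp [map_mul, conj_I, map_sub, map_add, map_div₀, map_one, map_ofNat]; try ring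
theorem Wzb_conj (hf : DifferentiableAt ℝ f p) :
    Wzb (fun w => conj (f w)) p = conj (Wz f p) := by
  unfold Wz Wzb
  rw [fderiv_conj_comp hf, fderiv_conj_comp hf]
  simp [map_mul, conj_I, map_sub, map_add, map_div₀, map_one, map_ofNat]; try ring

theorem diff_conj (hf : DifferentiableAt ℝ f p) :
    DifferentiableAt ℝ (fun w => conj (f w)) p := by
  have : (fun w => conj (f w)) = fun w => Complex.conjCLE (f w) := by
    funext w; simp
  rw [this]
  exact (Complex.conjCLE.differentiable.differentiableAt).comp p hf

theorem fderiv_inv_comp (hf : DifferentiableAt ℝ f p) (h0 : f p ≠ 0) (v : ℂ) :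
    fderiv ℝ (fun w => (f w)⁻¹) p v = -((f p)^2)⁻¹ * fderiv ℝ f p v := by
  have h1 : HasFDerivAt (fun y : ℂ => y⁻¹)
      (((1 : ℂ →L[ℂ] ℂ).smulRight (-((f p)^2)⁻¹)).restrictScalars ℝ) (f p) :=
    ((hasDerivAt_inv h0).hasFDerivAt).restrictScalars ℝ
  have h2 := (h1.comp p hf.hasFDerivAt).fderiv
  have : (fun w => (f w)⁻¹) = (fun y : ℂ => y⁻¹) ∘ f := rfl
  rw [this, h2]; simp; ring

theorem diff_inv (hf : DifferentiableAt ℝ f p) (h0 : f p ≠ 0) :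
    DifferentiableAt ℝ (fun w => (f w)⁻¹) p := by
  have h1 : HasFDerivAt (fun y : ℂ => y⁻¹)
      (((1 : ℂ →L[ℂ] ℂ).smulRight (-((f p)^2)⁻¹)).restrictScalars ℝ) (f p) :=
    ((hasDerivAt_inv h0).hasFDerivAt).restrictScalars ℝ
  exact (h1.comp p hf.hasFDerivAt).differentiableAt

theorem Wz_inv (hf : DifferentiableAt ℝ f p) (h0 : f p ≠ 0) :
    Wz (fun w => (f w)⁻¹) p = -((f p)^2)⁻¹ * Wz f p := by
  unfold Wz; rw [fderiv_inv_comp hf h0, fderiv_inv_comp hf h0]; ring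
theorem Wzb_inv (hf : DifferentiableAt ℝ f p) (h0 : f p ≠ 0) :
    Wzb (fun w => (f w)⁻¹) p = -((f p)^2)⁻¹ * Wzb f p := by
  unfold Wzb; rw [fderiv_inv_comp hf h0, fderiv_inv_comp hf h0]; ring

theorem diff_Wz {g : ℂ → ℂ} {z : ℂ} (hg : ContDiffAt ℝ (⊤ : ℕ∞) g z) :
    DifferentiableAt ℝ (Wz g) z := by
  have h1 : ContDiffAt ℝ (⊤ : ℕ∞) (fderiv ℝ g) z := hg.fderiv_right (by simp)
  have h2 : ∀ v : ℂ, DifferentiableAt ℝ (fun w => fderiv ℝ g w v) z := fun v =>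
    (((ContinuousLinearMap.apply ℝ ℂ v).contDiff).comp_contDiffAt z h1).differentiableAt (by simp)
  have : Wz g = fun w => (1/2) * (fderiv ℝ g w 1 - I * fderiv ℝ g w I) := rfl
  rw [this]
  exact (((h2 1).sub ((h2 I).const_mul I)).const_mul _)
end TK

theorem NS_eq (w : ℂ) : NS w = 1 - w * conj w := by
  unfold NS; rw [Complex.ofReal_sub, Complex.ofReal_one, ← Complex.mul_conj]

set_option maxHeartbeats 1000000 in
theorem stmt1 (Ω : Set ℂ) (hΩ : IsOpen Ω) (g F : ℂ → ℂ)
    (hg : ContDiffOn ℝ (⊤ : ℕ∞) g Ω) (hF : ContDiffOn ℝ (⊤ : ℕ∞) F Ω)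
    (hlt : ∀ z ∈ Ω, ‖g z‖ < 1)
    (hharm : ∀ z ∈ Ω, Wzb (Wz g) z + (2 * conj (g z) / NS (g z)) * Wz g z * Wzb g z = 0)
    (hF1 : ∀ z ∈ Ω, Wz F z = -4 * I * Wz g z / (NS (g z))^2)
    (hF2 : ∀ z ∈ Ω, Wzb F z = -4 * I * (g z)^2 * conj (Wz g z) / (NS (g z))^2) :
    ∀ z ∈ Ω,
      Wzb (fun w => Eta g w / 2
          - (I/4) * (conj (F w) * Wz F w - F w * conj (Wzb F w))) z
        = (I/4) * (F z * conj (Wzb (Wz F) z) - conj (F z) * Wzb (Wz F) z) ∧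
      (Wzb (fun w => Eta g w / 2
          - (I/4) * (conj (F w) * Wz F w - F w * conj (Wzb F w))) z).im = 0 := by
  intro z hz
  have hmem : Ω ∈ nhds z := hΩ.mem_nhds hz
  have hgz : ContDiffAt ℝ (⊤ : ℕ∞) g z := hg.contDiffAt hmem
  have hFz : ContDiffAt ℝ (⊤ : ℕ∞) F z := hF.contDiffAt hmem
  set Dn : ℂ → ℂ := fun w => 1 - g w * conj (g w) with hDn_def
  have hNS : ∀ w, NS (g w) = Dn w := by
    intro w; rw [NS_eq]
  have hDn_ne : ∀ w ∈ Ω, Dn w ≠ 0 := by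
    intro w hw
    rw [← hNS w]
    unfold NS
    rw [Complex.ofReal_ne_zero]
    have h1 := hlt w hw
    have h2 := Complex.sq_norm (g w)
    have h3 := norm_nonneg (g w)
    have : Complex.normSq (g w) < 1 := by nlinarith
    linarith
  have hdz : Dn z ≠ 0 := hDn_ne z hz
  have hdz2 : Dn z * Dn z ≠ 0 := mul_ne_zero hdz hdz
  -- differentiability
  have dg : DifferentiableAt ℝ g z := hgz.differentiableAt (by simp)
  have dcg : DifferentiableAt ℝ (fun w => conj (g w)) z := diff_conj dg
  have dWg : DifferentiableAt ℝ (Wz g) z := diff_Wz hgz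
  have dcWg : DifferentiableAt ℝ (fun w => conj (Wz g w)) z := diff_conj dWg
  have dDn : DifferentiableAt ℝ Dn z := by
    rw [hDn_def]; exact (differentiableAt_const _).sub (dg.mul dcg)
  have dDn2 : DifferentiableAt ℝ (fun w => Dn w * Dn w) z := dDn.mul dDn
  set iD : ℂ → ℂ := fun w => (Dn w * Dn w)⁻¹ with hiD
  have diD : DifferentiableAt ℝ iD z := by
    rw [hiD]; exact diff_inv dDn2 hdz2
  have dF' : DifferentiableAt ℝ F z := hFz.differentiableAt (by simp)
  have dcF : DifferentiableAt ℝ (fun w => conj (F w)) z := diff_conj dF'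
  set φ : ℂ → ℂ := fun w => -4*I * (Wz g w * iD w) with hφ
  set ψ : ℂ → ℂ := fun w => -4*I * ((g w * (g w * conj (Wz g w))) * iD w) with hψ
  have dφ : DifferentiableAt ℝ φ z := by
    rw [hφ]; exact (dWg.mul diD).const_mul _
  have dψ : DifferentiableAt ℝ ψ z := by
    rw [hψ]; exact ((dg.mul (dg.mul dcWg)).mul diD).const_mul _
  have dcψ : DifferentiableAt ℝ (fun w => conj (ψ w)) z := diff_conj dψ
  -- F derivative identifications
  have hWzF' : ∀ w ∈ Ω, Wz F w = φ w := by
    intro w hw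
    rw [hF1 w hw, hNS w]
    simp only [hφ, hiD]
    ring
  have hWzbF' : ∀ w ∈ Ω, Wzb F w = ψ w := by
    intro w hw
    rw [hF2 w hw, hNS w]
    simp only [hψ, hiD]
    ring
  have hWzFev : Wz F =ᶠ[nhds z] φ := by
    filter_upwards [hmem] with w hw; exact hWzF' w hw
  -- main eventual equality
  have hTeq : (fun w => Eta g w / 2
          - (I/4) * (conj (F w) * Wz F w - F w * conj (Wzb F w)))
      =ᶠ[nhds z] (fun w => (4*I) * ((conj (g w) * Wz g w) * iD w)
          - (I/4) * (conj (F w) * φ w - F w * conj (ψ w))) := by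
    filter_upwards [hmem] with w hw
    rw [hWzF' w hw, hWzbF' w hw]
    simp only [Eta, hNS w, hφ, hψ, hiD]
    ring
  -- values
  have v1 : Wzb Dn z = -(g z * conj (Wz g z) + conj (g z) * Wzb g z) := by
    rw [hDn_def, Wzb_sub (differentiableAt_const _) (dg.fun_mul dcg), Wzb_const,
      Wzb_mul dg dcg, Wzb_conj dg]
    ring
  have v1' : Wz Dn z = -(g z * conj (Wzb g z) + conj (g z) * Wz g z) := by
    rw [hDn_def, Wz_sub (differentiableAt_const _) (dg.fun_mul dcg), Wz_const,
      Wz_mul dg dcg, Wz_conj dg]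
    ring
  have hcd : conj (Dn z) = Dn z := by
    simp only [hDn_def, map_sub, map_one, map_mul, conj_conj]; ring
  have hG : Wzb (Wz g) z = -(2 * conj (g z) / Dn z * Wz g z * Wzb g z) := by
    rw [← hNS z]
    linear_combination hharm z hz
  have v2c : Wzb iD z = 2 * (g z * conj (Wz g z) + conj (g z) * Wzb g z) / (Dn z)^3 := by
    rw [hiD, Wzb_inv dDn2 hdz2, Wzb_mul dDn dDn, v1]
    field_simp [hdz]
    ring
  have v2c' : Wz iD z = 2 * (g z * conj (Wzb g z) + conj (g z) * Wz g z) / (Dn z)^3 := by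
    rw [hiD, Wz_inv dDn2 hdz2, Wz_mul dDn dDn, v1']
    field_simp [hdz]
    ring
  have v3c : Wzb φ z = -8*I * (g z * (Wz g z * conj (Wz g z))) / (Dn z)^3 := by
    rw [hφ, Wzb_const_mul (dWg.fun_mul diD), Wzb_mul dWg diD, v2c, hG]
    simp only [hiD]
    field_simp [hdz]
    ring
  have v4c : Wz ψ z = -8*I * (g z * (Wz g z * conj (Wz g z))) / (Dn z)^3 := by
    rw [hψ, Wz_const_mul ((dg.fun_mul (dg.fun_mul dcWg)).fun_mul diD), Wz_mul (dg.fun_mul (dg.fun_mul dcWg)) diD,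
      Wz_mul dg (dg.fun_mul dcWg), Wz_mul dg dcWg, Wz_conj dWg, v2c', hG]
    simp only [hiD]
    simp only [map_mul, map_sub, map_add, map_div₀, map_inv₀, map_neg, map_one,
      map_ofNat, conj_conj, conj_I, map_pow, hcd]
    field_simp [hdz]
    ring
  -- the key identity
  have key : Wzb (fun w => Eta g w / 2
          - (I/4) * (conj (F w) * Wz F w - F w * conj (Wzb F w))) z
        = (I/4) * (F z * conj (Wzb (Wz F) z) - conj (F z) * Wzb (Wz F) z) := by
    rw [Wzb_congr hTeq, Wzb_congr hWzFev]
    rw [Wzb_sub (((dcg.fun_mul dWg).fun_mul diD).const_mul _)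
        (((dcF.fun_mul dφ).fun_sub (dF'.fun_mul dcψ)).const_mul _),
      Wzb_const_mul ((dcg.fun_mul dWg).fun_mul diD) _,
      Wzb_const_mul ((dcF.fun_mul dφ).fun_sub (dF'.fun_mul dcψ)) _,
      Wzb_mul (dcg.fun_mul dWg) diD,
      Wzb_mul dcg dWg,
      Wzb_conj dg,
      Wzb_sub (dcF.fun_mul dφ) (dF'.fun_mul dcψ),
      Wzb_mul dcF dφ,
      Wzb_mul dF' dcψ,
      Wzb_conj dF',
      Wzb_conj dψ,
      hWzF' z hz, hWzbF' z hz,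
      v3c, v4c, v2c, hG]
    simp only [hφ, hψ, hiD]
    simp only [map_mul, map_sub, map_add, map_div₀, map_inv₀, map_neg, map_one,
      map_ofNat, conj_conj, conj_I, map_pow, hcd]
    field_simp [hdz]
    simp only [hDn_def]
    ring_nf
    simp only [show (I:ℂ)^2 = -1 from Complex.I_sq,
      show (I:ℂ)^3 = -I from by rw [pow_succ, Complex.I_sq]; ring,
      show (I:ℂ)^4 = 1 from by rw [pow_succ, show (I:ℂ)^3 = -I from by
        rw [pow_succ, Complex.I_sq]; ring]; simp [Complex.I_mul_I]]
    ring
  refine ⟨key, ?_⟩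
  rw [key]
  simp only [Complex.mul_im, Complex.mul_re, Complex.sub_re, Complex.sub_im,
    Complex.conj_re, Complex.conj_im, Complex.div_re, Complex.div_im,
    Complex.I_re, Complex.I_im, Complex.normSq_apply, Complex.ofReal_re, Complex.ofReal_im]
  norm_num
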